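/- arXiv:1411.3889 — 3 statements merged into one kernel-verified Lean document; each statement's English description precedes it below -/
import Mathlib

section
/- Let n be a natural number, σ a permutation of Fin n, and k an index with k+1 < n. Let τ be the transposition swapping k and k+1 and set σ' = τ ∘ σ. For any subset S ⊆ Fin n define P_σ(S) = #{x ∈ S : σ(x) ∉ S}. Then, as integers, P_{σ'}(S) − P_σ(S) = (χ_S(σ⁻¹(k)) − χ_S(σ⁻¹(k+1))) · (χ_S(k) − χ_S(k+1)), where χ_S denotes the {0,1}-valued indicator of S. In particular |P_{σ'}(S) − P_σ(S)| ≤ 1, and P_{σ'}(S) ≠ P_σ(S) exactly when exactly one of σ⁻¹(k), σ⁻¹(k+1) lies in S and exactly one of k, k+1 lies in S. -/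
/-!
With `χ` the indicator of `S`, `P_π(S) = ∑ₓ χ(x) (1 - χ(π x))`. Substituting `y = σ x`, the change
of this sum under `σ ↦ (a b) σ` becomes `-∑_y χ(σ⁻¹ y) (χ((a b) y) - χ(y))`, in which only `y = a`
and `y = b` contribute.
-/

open Equiv Finset

section

variable {α : Type*} [DecidableEq α]

def exteriorCount (S : Finset α) (π : Perm α) : ℕ := #{x ∈ S | π x ∉ S}

def memIndicator (S : Finset α) (x : α) : ℤ := if x ∈ S then 1 else 0

lemma memIndicator_sub_ne_zero_iff (S : Finset α) (x y : α) :
    memIndicator S x - memIndicator S y ≠ 0 ↔ Xor (x ∈ S) (y ∈ S) := by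
  unfold memIndicator
  split_ifs <;> simp_all

lemma abs_memIndicator_sub_le_one (S : Finset α) (x y : α) :
    |memIndicator S x - memIndicator S y| ≤ 1 := by
  unfold memIndicator
  split_ifs <;> norm_num

variable [Fintype α]

lemma sum_mul_sub_comp_swap {R : Type*} [CommRing R] (f g : α → R) {a b : α} (hab : a ≠ b) :
    ∑ y, f y * (g (swap a b y) - g y) = (f a - f b) * (g b - g a) := by
  rw [Fintype.sum_eq_add a b hab fun y hy => by
      rw [swap_apply_of_ne_of_ne hy.1 hy.2, sub_self, mul_zero],
    swap_apply_left, swap_apply_right]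
  ring

lemma exteriorCount_eq_sum (S : Finset α) (π : Perm α) :
    (exteriorCount S π : ℤ) = ∑ x, memIndicator S x * (1 - memIndicator S (π x)) := by
  rw [exteriorCount, natCast_card_filter, ← Fintype.sum_ite_mem]
  congr! 1 with x
  unfold memIndicator
  split_ifs <;> norm_num

theorem exteriorCount_swap_mul_sub (S : Finset α) (σ : Perm α) {a b : α} (hab : a ≠ b) :
    (exteriorCount S (swap a b * σ) : ℤ) - exteriorCount S σ =
      (memIndicator S (σ⁻¹ a) - memIndicator S (σ⁻¹ b)) *
        (memIndicator S a - memIndicator S b) := by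
  let χ := memIndicator S
  calc (exteriorCount S (swap a b * σ) : ℤ) - exteriorCount S σ
      = -∑ x, χ (σ⁻¹ (σ x)) * (χ (swap a b (σ x)) - χ (σ x)) := by
        simp only [χ, exteriorCount_eq_sum, ← sum_sub_distrib, ← sum_neg_distrib, Perm.mul_apply,
          Perm.coe_inv, symm_apply_apply]
        congr! 1 with x
        ring
    _ = -∑ y, χ (σ⁻¹ y) * (χ (swap a b y) - χ y) := by
        rw [Equiv.sum_comp σ fun y => χ (σ⁻¹ y) * (χ (swap a b y) - χ y)]
    _ = _ := by
        rw [sum_mul_sub_comp_swap _ _ hab]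
        ring

end

/-- Effect of removing an adjacent white–black BCFW bridge on the
exterior permutation number (EPN). -/
theorem EPN_change_under_adjacent_bridge (n : ℕ) (σ : Equiv.Perm (Fin n))
    (k : ℕ) (hk : k + 1 < n) (S : Finset (Fin n)) :
    let a : Fin n := ⟨k, Nat.lt_of_succ_lt hk⟩
    let b : Fin n := ⟨k + 1, hk⟩
    let σ' : Equiv.Perm (Fin n) := (Equiv.swap a b) * σ
    let P : Equiv.Perm (Fin n) → ℤ :=
      fun π => ((S.filter (fun x => π x ∉ S)).card : ℤ)
    let χ : Fin n → ℤ := fun x => if x ∈ S then 1 else 0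
    P σ' - P σ = (χ (σ⁻¹ a) - χ (σ⁻¹ b)) * (χ a - χ b) ∧
    |P σ' - P σ| ≤ 1 ∧
    (P σ' ≠ P σ ↔ (Xor' (σ⁻¹ a ∈ S) (σ⁻¹ b ∈ S) ∧ Xor' (a ∈ S) (b ∈ S))) := by
  intro a b σ' P χ
  have key : P σ' - P σ = (χ (σ⁻¹ a) - χ (σ⁻¹ b)) * (χ a - χ b) :=
    exteriorCount_swap_mul_sub S σ (Fin.ne_of_val_ne k.succ_ne_self.symm)
  refine ⟨key, ?_, ?_⟩
  · rw [key, abs_mul]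
    exact mul_le_one₀ (abs_memIndicator_sub_le_one S _ _) (abs_nonneg _)
      (abs_memIndicator_sub_le_one S _ _)
  · rw [← sub_ne_zero, key, mul_ne_zero_iff]
    exact and_congr (memIndicator_sub_ne_zero_iff S _ _) (memIndicator_sub_ne_zero_iff S _ _)
end

section
/- Let K be a field, write ⟨u,v⟩ = u₁v₂ − u₂v₁ for u, v ∈ K². Let a ≤ c be integers, v_a, v_{a+1}, …, v_c ∈ K², and x ∈ K² with ⟨v_j, x⟩ ≠ 0 for all a ≤ j ≤ c. Then Σ_{j=a}^{c−1} ⟨v_j, v_{j+1}⟩ / (⟨v_j, x⟩·⟨x, v_{j+1}⟩) = ⟨v_a, v_c⟩ / (⟨v_a, x⟩·⟨x, v_c⟩). -/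
/-! With `T(u,w) = ⟨u,w⟩ / (⟨u,x⟩⟨x,w⟩)` the sum is `∑ T(v j, v (j+1))`. The three-term
Plücker relation makes `T` additive along chains, `T(u,v) + T(v,w) = T(u,w)` whenever
`⟨u,x⟩, ⟨v,x⟩, ⟨w,x⟩ ≠ 0`, and `T(u,u) = 0`, so the sum telescopes to `T(v a, v c)`. -/

theorem Finset.sum_Ico_eq_of_cocycle {M : Type*} [AddCommMonoid M] (g : ℤ → ℤ → M)
    {a c : ℤ} (hac : a ≤ c) (h_self : g a a = 0)
    (h_add : ∀ j, a ≤ j → j < c → g a j + g j (j + 1) = g a (j + 1)) :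
    ∑ j ∈ Finset.Ico a c, g j (j + 1) = g a c := by
  induction c, hac using Int.leInduction with
  | base => simp [h_self]
  | succ c hac ih =>
    rw [← Finset.sum_Ico_add_eq_sum_Ico_add_one hac,
      ih fun j hj hjc => h_add j hj (by omega), h_add c hac (by omega)]

namespace Eikonal

variable {K : Type*} [Field K]

def bracket (p q : Fin 2 → K) : K := p 0 * q 1 - p 1 * q 0

theorem bracket_swap (p q : Fin 2 → K) : bracket q p = -bracket p q := by
  unfold bracket; ring

theorem bracket_self (p : Fin 2 → K) : bracket p p = 0 := by
  unfold bracket; ring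

theorem bracket_plucker (u v w x : Fin 2 → K) :
    bracket u v * bracket w x - bracket u w * bracket v x + bracket u x * bracket v w = 0 := by
  unfold bracket; ring

def splitTerm (x u v : Fin 2 → K) : K := bracket u v / (bracket u x * bracket x v)

theorem splitTerm_self (x u : Fin 2 → K) : splitTerm x u u = 0 := by
  simp [splitTerm, bracket_self]

theorem splitTerm_add_splitTerm {x u v w : Fin 2 → K} (hu : bracket u x ≠ 0)
    (hv : bracket v x ≠ 0) (hw : bracket w x ≠ 0) :
    splitTerm x u v + splitTerm x v w = splitTerm x u w := by
  unfold splitTerm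
  rw [bracket_swap v x, bracket_swap w x]
  field_simp
  linear_combination -bracket_plucker u v w x

end Eikonal

open Eikonal in
/-- Telescoping eikonal identity: the sum of the one-step split terms from
`a` to `c` collapses to a single term. -/
theorem eikonal_telescope {K : Type*} [Field K] (a c : ℤ) (hac : a ≤ c)
    (v : ℤ → Fin 2 → K) (x : Fin 2 → K)
    (hvx : ∀ j : ℤ, a ≤ j → j ≤ c →
      v j 0 * x 1 - v j 1 * x 0 ≠ 0) :
    let br : (Fin 2 → K) → (Fin 2 → K) → K :=
      fun p q => p 0 * q 1 - p 1 * q 0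
    ∑ j ∈ Finset.Ico a c,
        br (v j) (v (j + 1)) / (br (v j) x * br x (v (j + 1)))
      = br (v a) (v c) / (br (v a) x * br x (v c)) :=
  Finset.sum_Ico_eq_of_cocycle (fun j k => splitTerm x (v j) (v k)) hac (splitTerm_self x _)
    fun j haj hjc =>
      splitTerm_add_splitTerm (hvx a le_rfl hac) (hvx j haj hjc.le) (hvx _ (by omega) hjc)
end

section
/- Let K be a field, write ⟨u,v⟩ = u₁v₂ − u₂v₁ for u, v ∈ K². Let m ≥ 1, let v₁, …, v_m ∈ K² with indices taken cyclically (v_{m+1} = v₁), and let x ∈ K² satisfy ⟨v_j, x⟩ ≠ 0 for all 1 ≤ j ≤ m. Then Σ_{j=1}^{m} ⟨v_j, v_{j+1}⟩ / (⟨v_j, x⟩·⟨x, v_{j+1}⟩) = 0. Equivalently, if moreover ⟨v_i, v_{i+1}⟩ ≠ 0 for all i and D = Π_{i=1}^{m} ⟨v_i, v_{i+1}⟩, then the sum over all m cyclic insertion positions of x of the reciprocals of the planar Parke–Taylor denominators PT_j = D·⟨v_j, x⟩·⟨x, v_{j+1}⟩/⟨v_j, v_{j+1}⟩ vanishes. 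-/
/-!
Fix any `d` with `⟨x, d⟩ ≠ 0`. The Schouten identity
`⟨a, b⟩⟨x, d⟩ = ⟨a, d⟩⟨x, b⟩ + ⟨a, x⟩⟨b, d⟩` splits each eikonal term into partial fractions,
`⟨a, b⟩ / (⟨a, x⟩⟨x, b⟩) = F b - F a` with `F p = ⟨p, d⟩ / (⟨x, p⟩⟨x, d⟩)`, so the cyclic sum
telescopes to zero. Each reciprocal Parke–Taylor denominator is the corresponding eikonal term
divided by the common factor `D`, which gives the second form.
-/

namespace ParkeTaylor

variable {K : Type*} [Field K]

def angle (p q : Fin 2 → K) : K := p 0 * q 1 - p 1 * q 0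

theorem angle_swap (p q : Fin 2 → K) : angle q p = -angle p q := by
  unfold angle; ring

theorem angle_schouten (a b x d : Fin 2 → K) :
    angle a b * angle x d = angle a d * angle x b + angle a x * angle b d := by
  unfold angle; ring

theorem exists_angle_ne_zero {x : Fin 2 → K} (hx : x ≠ 0) : ∃ d, angle x d ≠ 0 := by
  by_cases hx0 : x 0 = 0
  · refine ⟨![1, 0], ?_⟩
    have hx1 : x 1 ≠ 0 := fun hx1 => hx (funext fun i => by fin_cases i <;> assumption)
    simpa [angle, hx0] using hx1
  · exact ⟨![0, 1], by simpa [angle] using hx0⟩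

theorem ne_zero_of_angle_ne_zero {p x : Fin 2 → K} (h : angle p x ≠ 0) : x ≠ 0 := by
  rintro rfl
  simp [angle] at h

theorem angle_div_eq_sub {a b x d : Fin 2 → K} (hax : angle a x ≠ 0) (hxb : angle x b ≠ 0)
    (hxd : angle x d ≠ 0) :
    angle a b / (angle a x * angle x b) =
      angle b d / (angle x b * angle x d) - angle a d / (angle x a * angle x d) := by
  have hxa : angle x a ≠ 0 := by rwa [angle_swap, neg_ne_zero]
  field_simp
  linear_combination angle x a * angle_schouten a b x d + angle a d * angle x b * angle_swap a x

theorem sum_angle_div_eq_zero {m : ℕ} (hm : 1 ≤ m) {v : ℕ → Fin 2 → K} {x : Fin 2 → K}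
    (hcyc : v (m + 1) = v 1) (hvx : ∀ j ∈ Finset.Icc 1 m, angle (v j) x ≠ 0) :
    ∑ j ∈ Finset.Icc 1 m, angle (v j) (v (j + 1)) / (angle (v j) x * angle x (v (j + 1))) = 0 := by
  have hv1x : angle (v 1) x ≠ 0 := hvx 1 (Finset.mem_Icc.mpr ⟨le_rfl, hm⟩)
  obtain ⟨d, hxd⟩ := exists_angle_ne_zero (ne_zero_of_angle_ne_zero hv1x)
  have hxv : ∀ j ∈ Finset.Icc 1 m, angle x (v (j + 1)) ≠ 0 := by
    intro j hj
    rw [angle_swap, neg_ne_zero]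
    obtain ⟨hj1, hjm⟩ := Finset.mem_Icc.mp hj
    rcases hjm.lt_or_eq with hjm | rfl
    · exact hvx (j + 1) (Finset.mem_Icc.mpr ⟨by omega, hjm⟩)
    · rwa [hcyc]
  let F : ℕ → K := fun j => angle (v j) d / (angle x (v j) * angle x d)
  calc _ = ∑ j ∈ Finset.Icc 1 m, (F (j + 1) - F j) :=
        Finset.sum_congr rfl fun j hj => angle_div_eq_sub (hvx j hj) (hxv j hj) hxd
    _ = F (m + 1) - F 1 := Finset.sum_Icc_sub hm F
    _ = 0 := by simp only [F, hcyc, sub_self]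

theorem inv_mul_mul_div_eq (D p q c : K) : (D * p * q / c)⁻¹ = D⁻¹ * (c / (p * q)) := by
  simp only [div_eq_mul_inv, mul_inv, inv_inv]
  ring

end ParkeTaylor

open ParkeTaylor in
/-- U(1) decoupling (MHV Parke–Taylor form): the cyclic sum of eikonal
terms vanishes; equivalently, the sum over all cyclic insertion positions of
`x` of the reciprocals of the planar Parke–Taylor denominators vanishes. -/
theorem u1_decoupling {K : Type*} [Field K] (m : ℕ) (hm : 1 ≤ m)
    (v : ℕ → Fin 2 → K) (x : Fin 2 → K)
    (hcyc : v (m + 1) = v 1)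
    (hvx : ∀ j ∈ Finset.Icc 1 m, v j 0 * x 1 - v j 1 * x 0 ≠ 0) :
    let br : (Fin 2 → K) → (Fin 2 → K) → K :=
      fun p q => p 0 * q 1 - p 1 * q 0
    (∑ j ∈ Finset.Icc 1 m,
        br (v j) (v (j + 1)) / (br (v j) x * br x (v (j + 1)))) = 0 ∧
    (∀ _hnz : ∀ i ∈ Finset.Icc 1 m, br (v i) (v (i + 1)) ≠ 0,
      ∑ j ∈ Finset.Icc 1 m,
        ((∏ i ∈ Finset.Icc 1 m, br (v i) (v (i + 1))) *
            br (v j) x * br x (v (j + 1)) / br (v j) (v (j + 1)))⁻¹ = 0) := by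
  intro br
  have eikonal_sum : ∑ j ∈ Finset.Icc 1 m,
      br (v j) (v (j + 1)) / (br (v j) x * br x (v (j + 1))) = 0 :=
    sum_angle_div_eq_zero hm hcyc hvx
  refine ⟨eikonal_sum, fun _ => ?_⟩
  rw [Finset.sum_congr rfl fun j _ => inv_mul_mul_div_eq _ _ _ _, ← Finset.mul_sum, eikonal_sum,
    mul_zero]
end
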